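/- Let R be a commutative ring and g ≥ 1. There is an R-linear bijection of R^{2g} carrying the form λ_{2g} of X^{#2g} to the standard symplectic form λ_{H^{⊕g}} (the alternating form with λ(e_{2i−1},e_{2i}) = 1 = −λ(e_{2i},e_{2i−1}) and all other pairings of standard basis vectors zero) and carrying the boundary map ∂_{2g} to the functional λ_{H^{⊕g}}(e₁, −). In other words, X^{#2g} is isomorphic as a formed space with boundary to (R^{2g}, λ_{H^{⊕g}}, λ_{H^{⊕g}}(e₁,−)). -/
import Mathlib


/-- The bilinear form of the formed space with boundary `X^{#n}`. -/
def lamX (R : Type) [CommRing R] (n : ℕ) (x y : Fin n → R) : R :=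
  ∑ i : Fin n, ∑ j : Fin n, (if (i : ℕ) < (j : ℕ) then x i * y j
    else if (j : ℕ) < (i : ℕ) then -(x i * y j) else 0)

/-- The boundary map of `X^{#n}`. -/
def bdX (R : Type) [CommRing R] (n : ℕ) (x : Fin n → R) : R := ∑ i, x i

/-- The standard symplectic form on `R^n` (interleaved hyperbolic pairs), i.e. the form of the
hyperbolic formed space `H^{⊕ g}` when `n = 2g`. -/
def omegaH (R : Type) [CommRing R] (n : ℕ) (x y : Fin n → R) : R :=
  ∑ i : Fin n, ∑ j : Fin n, (if (i : ℕ) % 2 = 0 ∧ (j : ℕ) = (i : ℕ) + 1 then x i * y j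
    else if (j : ℕ) % 2 = 0 ∧ (i : ℕ) = (j : ℕ) + 1 then -(x i * y j) else 0)

/-- The first standard basis vector `e₁` of `R^n`. -/
def stdE1 (R : Type) [CommRing R] (n : ℕ) : Fin n → R := fun i => if (i : ℕ) = 0 then 1 else 0

namespace XevenAux

open Finset

variable {R : Type} [CommRing R] {n : ℕ}

/-- Extension of a vector in `R^n` to a function on `ℕ`, by zero. -/
def XT (x : Fin n → R) (i : ℕ) : R := if h : i < n then x ⟨i, h⟩ else 0

lemma XT_coe (x : Fin n → R) (i : Fin n) : XT x (i : ℕ) = x i := by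
  simp [XT]

lemma XT_lt (x : Fin n → R) {i : ℕ} (h : i < n) : XT x i = x ⟨i, h⟩ := dif_pos h

lemma XT_ge (x : Fin n → R) {i : ℕ} (h : n ≤ i) : XT x i = 0 := dif_neg (by omega)

lemma XT_add (x y : Fin n → R) (i : ℕ) : XT (x + y) i = XT x i + XT y i := by
  unfold XT; split <;> simp

lemma XT_smul (r : R) (x : Fin n → R) (i : ℕ) : XT (r • x) i = r * XT x i := by
  unfold XT; split <;> simp

/-- Prefix sums of the extension. -/
def UT (x : Fin n → R) (m : ℕ) : R := ∑ i ∈ Finset.range m, XT x i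

lemma UT_succ (x : Fin n → R) (m : ℕ) : UT x (m + 1) = UT x m + XT x m :=
  Finset.sum_range_succ _ m

lemma UT_zero (x : Fin n → R) : UT x 0 = 0 := rfl

lemma UT_sat (x : Fin n → R) {m : ℕ} (h : n ≤ m) : UT x m = UT x n := by
  unfold UT
  refine (Finset.sum_subset (Finset.range_subset_range.2 h) fun i _ hni => ?_).symm
  simp only [Finset.mem_range, not_lt] at hni
  exact XT_ge x hni

lemma UT_add (x y : Fin n → R) (m : ℕ) : UT (x + y) m = UT x m + UT y m := by
  simp [UT, XT_add, Finset.sum_add_distrib]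

lemma UT_smul (r : R) (x : Fin n → R) (m : ℕ) : UT (r • x) m = r * UT x m := by
  simp [UT, XT_smul, Finset.mul_sum]

/-- Double `Fin` sums as double `range` sums. -/
lemma sum2 (n : ℕ) (F : ℕ → ℕ → R) :
    (∑ i : Fin n, ∑ j : Fin n, F (i : ℕ) (j : ℕ)) = ∑ i ∈ range n, ∑ j ∈ range n, F i j := by
  calc (∑ i : Fin n, ∑ j : Fin n, F (i : ℕ) (j : ℕ))
      = ∑ i : Fin n, ∑ j ∈ range n, F (i : ℕ) j :=
        Finset.sum_congr rfl fun i _ => Fin.sum_univ_eq_sum_range (F (i : ℕ)) n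
    _ = ∑ i ∈ range n, ∑ j ∈ range n, F i j :=
        Fin.sum_univ_eq_sum_range (fun i => ∑ j ∈ range n, F i j) n

lemma sum_ite_lt (x : Fin n → R) {j : ℕ} (hj : j ≤ n) :
    ∑ i ∈ range n, (if i < j then XT x i else 0) = UT x j := by
  have h1 : ∑ i ∈ range j, (if i < j then XT x i else 0)
      = ∑ i ∈ range n, (if i < j then XT x i else 0) :=
    Finset.sum_subset (Finset.range_subset_range.2 hj)
      (fun i _ hni => if_neg (by simp only [Finset.mem_range, not_lt] at hni; omega))
  rw [← h1, UT]
  exact Finset.sum_congr rfl fun i hi => if_pos (by simpa using hi)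

/-- `lamX` in telescoped prefix-sum form. -/
lemma lamX_tel (x y : Fin n → R) :
    lamX R n x y = ∑ j ∈ range n, (UT x j * UT y (j+1) - UT x (j+1) * UT y j) := by
  have h0 : lamX R n x y = ∑ i ∈ range n, ∑ j ∈ range n,
      (if i < j then XT x i * XT y j else if j < i then -(XT x i * XT y j) else 0) := by
    rw [← sum2]
    unfold lamX
    exact Finset.sum_congr rfl fun i _ => Finset.sum_congr rfl fun j _ => by
      simp [XT_coe]
  rw [h0]
  have h1 : ∑ i ∈ range n, ∑ j ∈ range n,
      (if i < j then XT x i * XT y j else if j < i then -(XT x i * XT y j) else 0)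
      = (∑ i ∈ range n, ∑ j ∈ range n, (if i < j then XT x i * XT y j else 0))
        - (∑ i ∈ range n, ∑ j ∈ range n, (if j < i then XT x i * XT y j else 0)) := by
    rw [← Finset.sum_sub_distrib]
    refine Finset.sum_congr rfl fun i _ => ?_
    rw [← Finset.sum_sub_distrib]
    refine Finset.sum_congr rfl fun j _ => ?_
    by_cases h1 : i < j
    · simp [h1, show ¬ j < i by omega]
    · by_cases h2 : j < i <;> simp [h1, h2]
  rw [h1]
  have h2 : ∑ i ∈ range n, ∑ j ∈ range n, (if i < j then XT x i * XT y j else 0)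
      = ∑ j ∈ range n, UT x j * XT y j := by
    rw [Finset.sum_comm]
    refine Finset.sum_congr rfl fun j hj => ?_
    calc ∑ i ∈ range n, (if i < j then XT x i * XT y j else 0)
        = (∑ i ∈ range n, (if i < j then XT x i else 0)) * XT y j := by
          rw [Finset.sum_mul]
          exact Finset.sum_congr rfl fun i _ => by split <;> simp
      _ = UT x j * XT y j := by rw [sum_ite_lt x (le_of_lt (mem_range.1 hj))]
  have h3 : ∑ i ∈ range n, ∑ j ∈ range n, (if j < i then XT x i * XT y j else 0)
      = ∑ i ∈ range n, XT x i * UT y i := by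
    refine Finset.sum_congr rfl fun i hi => ?_
    calc ∑ j ∈ range n, (if j < i then XT x i * XT y j else 0)
        = XT x i * ∑ j ∈ range n, (if j < i then XT y j else 0) := by
          rw [Finset.mul_sum]
          exact Finset.sum_congr rfl fun j _ => by split <;> simp
      _ = XT x i * UT y i := by rw [sum_ite_lt y (le_of_lt (mem_range.1 hi))]
  rw [h2, h3, ← Finset.sum_sub_distrib]
  refine Finset.sum_congr rfl fun j _ => ?_
  rw [UT_succ x j, UT_succ y j]
  ring

/-- Pairing up a sum over `range (2*g)`. -/
lemma pair_sum (f : ℕ → R) (g : ℕ) :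
    ∑ j ∈ range (2*g), f j = ∑ k ∈ range g, (f (2*k) + f (2*k+1)) := by
  induction g with
  | zero => simp
  | succ g ih =>
    rw [Finset.sum_range_succ, ← ih, show 2*(g+1) = 2*g+1+1 by ring,
      Finset.sum_range_succ, Finset.sum_range_succ]
    ring_nf

/-- `omegaH` on `R^{2g}` as a sum over hyperbolic pairs. -/
lemma omegaH_pairs (g : ℕ) (a b : Fin (2*g) → R) :
    omegaH R (2*g) a b
      = ∑ k ∈ range g, (XT a (2*k) * XT b (2*k+1) - XT a (2*k+1) * XT b (2*k)) := by
  have h0 : omegaH R (2*g) a b = ∑ i ∈ range (2*g), ∑ j ∈ range (2*g),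
      (if i % 2 = 0 ∧ j = i + 1 then XT a i * XT b j
        else if j % 2 = 0 ∧ i = j + 1 then -(XT a i * XT b j) else 0) := by
    rw [← sum2]
    unfold omegaH
    exact Finset.sum_congr rfl fun i _ => Finset.sum_congr rfl fun j _ => by
      simp [XT_coe]
  rw [h0]
  have inner : ∀ i ∈ range (2*g), (∑ j ∈ range (2*g),
      (if i % 2 = 0 ∧ j = i + 1 then XT a i * XT b j
        else if j % 2 = 0 ∧ i = j + 1 then -(XT a i * XT b j) else 0))
      = if i % 2 = 0 then XT a i * XT b (i+1) else -(XT a i * XT b (i-1)) := by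
    intro i hi
    simp only [Finset.mem_range] at hi
    by_cases hpar : i % 2 = 0
    · rw [Finset.sum_eq_single (i+1)]
      · rw [if_pos ⟨hpar, rfl⟩, if_pos hpar]
      · intro j _ hne
        rw [if_neg (by omega), if_neg (by omega)]
      · intro h
        exact absurd (Finset.mem_range.2 (by omega)) h
    · rw [Finset.sum_eq_single (i-1)]
      · rw [if_neg (by omega), if_pos (by omega), if_neg hpar]
      · intro j _ hne
        rw [if_neg (by omega), if_neg (by omega)]
      · intro h
        exact absurd (Finset.mem_range.2 (by omega)) h
  rw [Finset.sum_congr rfl inner, pair_sum]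
  refine Finset.sum_congr rfl fun k _ => ?_
  rw [if_pos (by omega), if_neg (by omega)]
  have : 2*k+1-1 = 2*k := by omega
  rw [this]
  ring

section Maps

variable (g : ℕ)

/-- The forward map of the isomorphism. -/
def Emap (x : Fin (2*g) → R) : Fin (2*g) → R := fun j =>
  if (j : ℕ) = 0 then UT x (2*g - 1)
  else if (j : ℕ) % 2 = 1 then UT x (2*g - (j : ℕ) + 1)
  else UT x (2*g - (j : ℕ) - 1) - UT x (2*g - (j : ℕ) + 1)

/-- Recovered prefix sums from a target vector. -/
def wc (c : Fin (2*g) → R) (m : ℕ) : R :=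
  if m % 2 = 0 then XT c (2*g - m + 1)
  else ∑ i ∈ range (2*g - m), (if i % 2 = 0 then XT c i else 0)

/-- The inverse map of the isomorphism. -/
def Gmap (c : Fin (2*g) → R) : Fin (2*g) → R := fun j =>
  wc g c ((j : ℕ) + 1) - wc g c (j : ℕ)

variable {g}

lemma XT_Emap_zero (hg : 1 ≤ g) (x : Fin (2*g) → R) :
    XT (Emap g x) 0 = UT x (2*g - 1) := by
  rw [XT_lt _ (by omega : 0 < 2*g)]
  simp [Emap]

lemma XT_Emap_odd (x : Fin (2*g) → R) {m : ℕ} (hm : m % 2 = 1) (hlt : m < 2*g) :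
    XT (Emap g x) m = UT x (2*g - m + 1) := by
  rw [XT_lt _ hlt]
  show (if m = 0 then _ else if m % 2 = 1 then _ else _) = _
  rw [if_neg (by omega), if_pos hm]

lemma XT_Emap_even (x : Fin (2*g) → R) {m : ℕ} (hm : m % 2 = 0) (h2 : 2 ≤ m) (hlt : m < 2*g) :
    XT (Emap g x) m = UT x (2*g - m - 1) - UT x (2*g - m + 1) := by
  rw [XT_lt _ hlt]
  show (if m = 0 then _ else if m % 2 = 1 then _ else _) = _
  rw [if_neg (by omega), if_neg (by omega)]

/-- The main computation: `Emap` carries `lamX` to `omegaH`. -/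
lemma omega_Emap (hg : 1 ≤ g) (x y : Fin (2*g) → R) :
    omegaH R (2*g) (Emap g x) (Emap g y) = lamX R (2*g) x y := by
  set D : ℕ → R := fun j => UT x j * UT y (j+1) - UT x (j+1) * UT y j with hD
  have hD0 : D 0 = 0 := by simp [hD, UT_zero]
  have hDn : D (2*g) = 0 := by
    simp only [hD]
    rw [UT_sat x (by omega : 2*g ≤ 2*g+1), UT_sat y (by omega : 2*g ≤ 2*g+1)]
    ring
  rw [omegaH_pairs, lamX_tel]
  have key : ∀ k ∈ range g,
      XT (Emap g x) (2*k) * XT (Emap g y) (2*k+1)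
        - XT (Emap g x) (2*k+1) * XT (Emap g y) (2*k)
      = D (2*g - 2*k) + D (2*g - 2*k - 1) := by
    intro k hk
    simp only [Finset.mem_range] at hk
    have hodd : (2*k+1) % 2 = 1 := by omega
    have hlt1 : 2*k+1 < 2*g := by omega
    rw [XT_Emap_odd x hodd hlt1, XT_Emap_odd y hodd hlt1]
    have e1 : 2*g - (2*k+1) + 1 = 2*g - 2*k := by omega
    rw [e1]
    rcases Nat.eq_zero_or_pos k with hk0 | hkpos
    · subst hk0
      rw [show 2*0 = 0 by ring, XT_Emap_zero hg x, XT_Emap_zero hg y]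
      have e2 : 2*g - 0 = 2*g := by omega
      have e3 : 2*g - 0 - 1 = 2*g - 1 := by omega
      rw [e2, hDn]
      simp only [hD]
      have e4 : 2*g - 1 + 1 = 2*g := by omega
      rw [e4]
      ring
    · have heven : (2*k) % 2 = 0 := by omega
      rw [XT_Emap_even x heven (by omega) (by omega), XT_Emap_even y heven (by omega) (by omega)]
      simp only [hD]
      have e5 : 2*g - 2*k - 1 + 1 = 2*g - 2*k := by omega
      rw [e5]
      ring
  rw [Finset.sum_congr rfl key]
  have step1 : ∑ k ∈ range g, (D (2*g - 2*k) + D (2*g - 2*k - 1))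
      = ∑ j ∈ range (2*g), D (2*g - j) := by
    rw [pair_sum (fun j => D (2*g - j)) g]
    refine Finset.sum_congr rfl fun k _ => ?_
    have : 2*g - (2*k+1) = 2*g - 2*k - 1 := by omega
    rw [this]
  have step2 : ∑ j ∈ range (2*g), D (2*g - j) = ∑ j ∈ range (2*g), D (j+1) := by
    have : ∀ j ∈ range (2*g), D (2*g - j) = D ((2*g - 1 - j) + 1) := by
      intro j hj
      simp only [Finset.mem_range] at hj
      congr 1
      omega
    rw [Finset.sum_congr rfl this, Finset.sum_range_reflect (fun t => D (t+1)) (2*g)]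
  have step3 : ∑ j ∈ range (2*g), D (j+1) = ∑ j ∈ range (2*g), D j := by
    have ha := Finset.sum_range_succ' D (2*g)
    have hb := Finset.sum_range_succ D (2*g)
    rw [ha] at hb
    rw [hD0, hDn] at hb
    simpa using hb
  rw [step1, step2, step3]

lemma bdX_UT (x : Fin n → R) : bdX R n x = UT x n := by
  unfold bdX UT
  rw [← Fin.sum_univ_eq_sum_range (XT x) n]
  exact Finset.sum_congr rfl fun i _ => (XT_coe x i).symm

lemma XT_stdE1_zero (hg : 0 < n) : XT (stdE1 R n) 0 = 1 := by
  rw [XT_lt _ hg]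
  simp [stdE1]

lemma XT_stdE1_ne {m : ℕ} (hm : m ≠ 0) : XT (stdE1 R n) m = 0 := by
  unfold XT
  split
  · simp [stdE1, hm]
  · rfl

/-- Pairing against the first standard basis vector. -/
lemma omega_e1 (hg : 1 ≤ g) (b : Fin (2*g) → R) :
    omegaH R (2*g) (stdE1 R (2*g)) b = XT b 1 := by
  rw [omegaH_pairs]
  rw [Finset.sum_eq_single 0]
  · rw [show 2*0 = 0 by ring, show 2*0+1 = 1 by ring, XT_stdE1_zero (by omega),
      XT_stdE1_ne (by omega)]
    ring
  · intro k _ hk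
    rw [XT_stdE1_ne (by omega), XT_stdE1_ne (by omega)]
    ring
  · intro h
    exact absurd (Finset.mem_range.2 (by omega)) h

/-- Telescoping sums over even indices. -/
lemma Tlem (F φ : ℕ → R) (L : ℕ) (h0 : F 0 = φ 0)
    (hs : ∀ l, l < L → F (2*l+2) = φ (2*l+2) - φ (2*l)) :
    ∑ i ∈ range (2*L+1), (if i % 2 = 0 then F i else 0) = φ (2*L) := by
  induction L with
  | zero => simpa using h0
  | succ L ih =>
    have h2 : 2*(L+1)+1 = (2*L+1)+1+1 := by ring
    rw [h2, Finset.sum_range_succ, Finset.sum_range_succ,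
      ih (fun l hl => hs l (by omega))]
    rw [if_neg (by omega), if_pos (by omega)]
    rw [show 2*L+1+1 = 2*L+2 by ring, hs L (by omega)]
    have : 2*L+2 = 2*(L+1) := by ring
    rw [this]
    ring

/-- The recovered prefix sums of `Emap x` are the prefix sums of `x`. -/
lemma wc_Emap (hg : 1 ≤ g) (x : Fin (2*g) → R) :
    ∀ m ≤ 2*g, wc g (Emap g x) m = UT x m := by
  intro m hm
  by_cases hpar : m % 2 = 0
  · rw [wc, if_pos hpar]
    rcases Nat.eq_zero_or_pos m with hm0 | hmpos
    · subst hm0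
      rw [XT_ge _ (by omega), UT_zero]
    · have h2 : 2 ≤ m := by omega
      have hidx : (2*g - m + 1) % 2 = 1 := by omega
      have hlt : 2*g - m + 1 < 2*g := by omega
      rw [XT_Emap_odd x hidx hlt]
      congr 1
      omega
  · rw [wc, if_neg hpar]
    obtain ⟨L, hL⟩ : ∃ L, 2*g - m = 2*L + 1 := ⟨(2*g - m - 1)/2, by omega⟩
    rw [hL]
    have hres := Tlem (XT (Emap g x)) (fun i => UT x (2*g - 1 - i)) L ?_ ?_
    · rw [hres]
      congr 1
      omega
    · rw [XT_Emap_zero hg x]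
      simp
    · intro l hl
      have heven : (2*l+2) % 2 = 0 := by omega
      rw [XT_Emap_even x heven (by omega) (by omega)]
      show _ = UT x (2*g - 1 - (2*l+2)) - UT x (2*g - 1 - 2*l)
      rw [show 2*g - (2*l+2) - 1 = 2*g - 1 - (2*l+2) by omega,
        show 2*g - (2*l+2) + 1 = 2*g - 1 - 2*l by omega]

lemma Gmap_Emap (hg : 1 ≤ g) (x : Fin (2*g) → R) : Gmap g (Emap g x) = x := by
  funext j
  show wc g (Emap g x) ((j : ℕ) + 1) - wc g (Emap g x) (j : ℕ) = x j
  rw [wc_Emap hg x ((j : ℕ) + 1) (by omega), wc_Emap hg x (j : ℕ) (by omega),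
    UT_succ, XT_coe]
  ring

lemma UT_Gmap (c : Fin (2*g) → R) : ∀ m ≤ 2*g, UT (Gmap g c) m = wc g c m := by
  intro m hm
  have h1 : UT (Gmap g c) m = ∑ i ∈ range m, (wc g c (i+1) - wc g c i) := by
    unfold UT
    refine Finset.sum_congr rfl fun i hi => ?_
    simp only [Finset.mem_range] at hi
    rw [XT_lt _ (by omega : i < 2*g)]
    rfl
  rw [h1, Finset.sum_range_sub (wc g c) m]
  have hw0 : wc g c 0 = 0 := by
    rw [wc, if_pos (by omega)]
    exact XT_ge _ (by omega)
  rw [hw0, sub_zero]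

lemma Emap_Gmap (hg : 1 ≤ g) (c : Fin (2*g) → R) : Emap g (Gmap g c) = c := by
  funext j
  have hj : (j : ℕ) < 2*g := j.isLt
  show (if (j : ℕ) = 0 then UT (Gmap g c) (2*g - 1)
    else if (j : ℕ) % 2 = 1 then UT (Gmap g c) (2*g - (j : ℕ) + 1)
    else UT (Gmap g c) (2*g - (j : ℕ) - 1) - UT (Gmap g c) (2*g - (j : ℕ) + 1)) = c j
  by_cases hj0 : (j : ℕ) = 0
  · rw [if_pos hj0, UT_Gmap c _ (by omega), wc, if_neg (by omega)]
    rw [show 2*g - (2*g-1) = 1 by omega, Finset.sum_range_one, if_pos (by omega)]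
    rw [show (0 : ℕ) = (j : ℕ) from hj0.symm, XT_coe]
  · rw [if_neg hj0]
    by_cases hpar : (j : ℕ) % 2 = 1
    · rw [if_pos hpar, UT_Gmap c _ (by omega), wc, if_pos (by omega)]
      rw [show 2*g - (2*g - (j : ℕ) + 1) + 1 = (j : ℕ) by omega, XT_coe]
    · rw [if_neg hpar]
      rw [UT_Gmap c _ (by omega), UT_Gmap c _ (by omega)]
      rw [wc, wc, if_neg (by omega), if_neg (by omega)]
      rw [show 2*g - (2*g - (j : ℕ) - 1) = ((j : ℕ) - 1) + 1 + 1 by omega,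
        show 2*g - (2*g - (j : ℕ) + 1) = (j : ℕ) - 1 by omega]
      rw [Finset.sum_range_succ, Finset.sum_range_succ]
      rw [if_neg (by omega), if_pos (by omega)]
      rw [show (j : ℕ) - 1 + 1 = (j : ℕ) by omega, XT_coe]
      ring

variable (g)

/-- `Emap` as a linear map. -/
def Elin : (Fin (2*g) → R) →ₗ[R] (Fin (2*g) → R) where
  toFun := Emap g
  map_add' x y := by
    funext j
    simp only [Emap, Pi.add_apply, UT_add]
    split_ifs <;> ring
  map_smul' r x := by
    funext j
    simp only [Emap, Pi.smul_apply, UT_smul, RingHom.id_apply, smul_eq_mul]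
    split_ifs <;> ring

lemma wc_add (x y : Fin (2*g) → R) (m : ℕ) : wc g (x + y) m = wc g x m + wc g y m := by
  simp only [wc, XT_add]
  split_ifs
  · rfl
  · rw [← Finset.sum_add_distrib]
    exact Finset.sum_congr rfl fun i _ => by split <;> simp

lemma wc_smul (r : R) (x : Fin (2*g) → R) (m : ℕ) : wc g (r • x) m = r * wc g x m := by
  simp only [wc, XT_smul]
  split_ifs
  · rfl
  · rw [Finset.mul_sum]
    exact Finset.sum_congr rfl fun i _ => by split <;> simp

/-- `Gmap` as a linear map. -/
def Glin : (Fin (2*g) → R) →ₗ[R] (Fin (2*g) → R) where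
  toFun := Gmap g
  map_add' x y := by
    funext j
    simp only [Gmap, Pi.add_apply, wc_add]
    ring
  map_smul' r x := by
    funext j
    simp only [Gmap, Pi.smul_apply, wc_smul, RingHom.id_apply, smul_eq_mul]
    ring

variable {g}

/-- The linear equivalence. -/
def eEquiv (hg : 1 ≤ g) : (Fin (2*g) → R) ≃ₗ[R] (Fin (2*g) → R) :=
  LinearEquiv.ofLinear (Elin g) (Glin g)
    (LinearMap.ext fun c => Emap_Gmap hg c)
    (LinearMap.ext fun x => Gmap_Emap hg x)

lemma eEquiv_apply (hg : 1 ≤ g) (x : Fin (2*g) → R) : eEquiv hg x = Emap g x := rfl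

end Maps

end XevenAux

/-- `X^{#2g} ≅ (R^{2g}, λ_{H^{⊕g}}, λ_{H^{⊕g}}(e₁, -))` as formed spaces
with boundary: there is a linear bijection of `R^{2g}` carrying the form `λ_{2g}` of `X^{#2g}`
to the standard symplectic form and the boundary `∂_{2g}` to `λ_{H^{⊕g}}(e₁, -)`. -/
theorem Xeven_iso
    (R : Type) [CommRing R] (g : ℕ) (hg : 1 ≤ g) :
    ∃ e : (Fin (2 * g) → R) ≃ₗ[R] (Fin (2 * g) → R),
      (∀ x y, omegaH R (2 * g) (e x) (e y) = lamX R (2 * g) x y) ∧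
      (∀ x, omegaH R (2 * g) (stdE1 R (2 * g)) (e x) = bdX R (2 * g) x) := by
  refine ⟨XevenAux.eEquiv hg, fun x y => ?_, fun x => ?_⟩
  · rw [XevenAux.eEquiv_apply hg, XevenAux.eEquiv_apply hg]
    exact XevenAux.omega_Emap hg x y
  · rw [XevenAux.eEquiv_apply hg, XevenAux.omega_e1 hg]
    rw [XevenAux.XT_Emap_odd x (by omega) (by omega)]
    rw [XevenAux.bdX_UT]
    congr 1
    omega
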